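/- Let (X,σ) be a δ-hyperbolic GCB-space that is P₀-packed at scale r₀, Γ a group of σ-isometries acting discretely and freely, and x ∈ X a basepoint. For τ ≥ 0 set K_τ = {γ ∈ Loc-Geod_σ(Γ\X) : γ(n) ∈ closed ball B̄(πx,τ) for all n ∈ ℤ}. Then K_τ is a compact Φ₁-invariant subset of Loc-Geod_σ(Γ\X) for every τ ≥ 0, and every compact Φ₁-invariant subset of Loc-Geod_σ(Γ\X) is contained in K_τ for some τ ≥ 0. -/

import Mathlib

open Filter Metric Set MeasureTheory Topology
open scoped ENNReal NNReal

noncomputable section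

namespace Paper

variable {X : Type*} [MetricSpace X]

/-- The Gromov product `(y,z)_x`. -/
def gromov (x y z : X) : ℝ := (dist x y + dist x z - dist y z) / 2

/-- `δ`-hyperbolicity via the four points condition on Gromov products. -/
def IsHyperbolic (X : Type*) [MetricSpace X] (δ : ℝ) : Prop :=
  ∀ w x y z : X, min (gromov w x y) (gromov w y z) - δ ≤ gromov w x z

/-- `X` is `P₀`-packed at scale `r₀`: every closed ball of radius `3r₀` contains at most `P₀`
points that are pairwise `2r₀`-separated. -/
def IsPacked (X : Type*) [MetricSpace X] (P₀ : ℕ) (r₀ : ℝ) : Prop :=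
  ∀ (x : X) (s : Finset X), (↑s : Set X) ⊆ Metric.closedBall x (3 * r₀) →
    (∀ y ∈ s, ∀ z ∈ s, y ≠ z → 2 * r₀ < dist y z) → s.card ≤ P₀

/-- A `σ`-geodesic line: an isometric line all whose subsegments are `σ`-geodesics. -/
structure IsSigmaGeodLine (σ : X → X → ℝ → X) (γ : ℝ → X) : Prop where
  isom : Isometry γ
  seg : ∀ s t : ℝ, s ≤ t → ∀ l ∈ Set.Icc (0:ℝ) 1, σ (γ s) (γ t) l = γ (s + l * (t - s))

/-- `(X,σ)` is a GCB-space: `σ` is a convex, consistent, reversible, geodesically complete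
geodesic bicombing on the (complete) metric space `X`. -/
structure IsGCB (σ : X → X → ℝ → X) : Prop where
  source : ∀ x y : X, σ x y 0 = x
  target : ∀ x y : X, σ x y 1 = y
  propor : ∀ x y : X, ∀ s ∈ Set.Icc (0:ℝ) 1, ∀ t ∈ Set.Icc (0:ℝ) 1,
    dist (σ x y s) (σ x y t) = |s - t| * dist x y
  convex : ∀ x y x' y' : X, ConvexOn ℝ (Set.Icc (0:ℝ) 1) fun t => dist (σ x y t) (σ x' y' t)
  consistent : ∀ x y : X, ∀ s t : ℝ, 0 ≤ s → s ≤ t → t ≤ 1 → ∀ l ∈ Set.Icc (0:ℝ) 1,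
    σ (σ x y s) (σ x y t) l = σ x y ((1 - l) * s + l * t)
  reversible : ∀ x y : X, ∀ t ∈ Set.Icc (0:ℝ) 1, σ x y t = σ y x (1 - t)
  geodComplete : ∀ x y : X, ∃ γ : ℝ → X, IsSigmaGeodLine σ γ ∧ ∃ a b : ℝ, a ≤ b ∧
    b - a = dist x y ∧ ∀ l ∈ Set.Icc (0:ℝ) 1, γ (a + l * (b - a)) = σ x y l

section Group

variable (G : Type*) [Group G] [MulAction G X]

/-- A group of isometries is discrete if orbits meet balls in finitely many elements. -/
def DiscreteAction (X : Type*) [MetricSpace X] [MulAction G X] : Prop :=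
  ∀ (x : X) (R : ℝ), {g : G | dist x (g • x) ≤ R}.Finite

/-- The action is free. -/
def FreeAction (X : Type*) [MetricSpace X] [MulAction G X] : Prop :=
  ∀ (g : G) (x : X), g • x = x → g = 1

/-- `Γ` acts by `σ`-isometries. -/
def SigmaEquivariant (σ : X → X → ℝ → X) : Prop :=
  ∀ (g : G) (x y : X), ∀ t ∈ Set.Icc (0:ℝ) 1, g • σ x y t = σ (g • x) (g • y) t

/-- The number of orbit points in the open ball `B(x,T)`. -/
def orbitCount (x : X) (T : ℝ) : ℕ :=
  Nat.card {y : X // y ∈ MulAction.orbit G x ∧ dist x y < T}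

/-- The critical exponent `h_Γ = limsup (1/T) log #(Γx ∩ B(x,T))`. -/
def critExp (x : X) : EReal :=
  limsup (fun T : ℝ => ((Real.log (orbitCount G x T) / T : ℝ) : EReal)) atTop

end Group

/-- The quotient space `Γ\X`. -/
def QuotX (G : Type*) (X : Type*) [Group G] [MulAction G X] [MetricSpace X] :=
  Quotient (MulAction.orbitRel G X)

section Quot

variable (G : Type*) [Group G] [MulAction G X] [IsIsometricSMul G X]

private lemma bddb (x y : X) : BddBelow (Set.range fun g : G => dist x (g • y)) :=
  ⟨0, by rintro _ ⟨g, rfl⟩; exact dist_nonneg⟩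

/-- The quotient distance `d(πx,πy) = inf_g d(x, g·y)`. -/
def qdist (a b : QuotX G X) : ℝ :=
  ⨅ g : G, dist (Quotient.out a) (g • Quotient.out b)

private lemma qdist_self (a : QuotX G X) : qdist G a a = 0 := by
  refine le_antisymm ?_ (le_ciInf fun g => dist_nonneg)
  have h := ciInf_le (bddb G (Quotient.out a) (Quotient.out a)) (1 : G)
  exact h.trans_eq (by simp)

private lemma qdist_comm_le (a b : QuotX G X) : qdist G a b ≤ qdist G b a := by
  refine le_ciInf fun g => ?_
  have h := ciInf_le (bddb G (Quotient.out a) (Quotient.out b)) g⁻¹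
  refine h.trans_eq ?_
  rw [← dist_smul g (Quotient.out a) (g⁻¹ • Quotient.out b), smul_inv_smul, dist_comm]

private lemma qdist_triangle (a b c : QuotX G X) :
    qdist G a c ≤ qdist G a b + qdist G b c := by
  refine le_of_forall_pos_le_add fun ε hε => ?_
  have h1 : qdist G a b < qdist G a b + ε / 2 := lt_add_of_pos_right _ (half_pos hε)
  have h2 : qdist G b c < qdist G b c + ε / 2 := lt_add_of_pos_right _ (half_pos hε)
  obtain ⟨g, hg⟩ := exists_lt_of_ciInf_lt h1
  obtain ⟨h, hh⟩ := exists_lt_of_ciInf_lt h2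
  have key : qdist G a c ≤ dist (Quotient.out a) ((g * h) • Quotient.out c) :=
    ciInf_le (bddb G _ _) (g * h)
  have e : dist (g • Quotient.out b) ((g * h) • Quotient.out c)
      = dist (Quotient.out b) (h • Quotient.out c) := by
    rw [mul_smul, dist_smul]
  have tri := dist_triangle (Quotient.out a) (g • Quotient.out b) ((g * h) • Quotient.out c)
  rw [e] at tri
  have := key.trans tri
  linarith

/-- The quotient pseudometric on `Γ\X` (a genuine metric whenever the action is discrete
and free). -/
instance : PseudoMetricSpace (QuotX G X) where
  dist := qdist G
  dist_self := qdist_self G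
  dist_comm a b := le_antisymm (qdist_comm_le G a b) (qdist_comm_le G b a)
  dist_triangle := qdist_triangle G

/-- The projection `π : X → Γ\X`. -/
def projQ (x : X) : QuotX G X := Quotient.mk (MulAction.orbitRel G X) x

lemma projQ_dist_le (x y : X) : dist (projQ G x) (projQ G y) ≤ dist x y := by
  obtain ⟨k, hk⟩ := MulAction.mem_orbit_iff.mp
    ((MulAction.orbitRel_apply (G := G)).mp (Quotient.mk_out (s := MulAction.orbitRel G X) x))
  obtain ⟨l, hl⟩ := MulAction.mem_orbit_iff.mp
    ((MulAction.orbitRel_apply (G := G)).mp (Quotient.mk_out (s := MulAction.orbitRel G X) y))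
  have h1 : dist (projQ G x) (projQ G y)
      ≤ dist (Quotient.out (projQ G x)) ((k * l⁻¹) • Quotient.out (projQ G y)) :=
    ciInf_le (bddb G _ _) (k * l⁻¹)
  have hk2 : Quotient.out (projQ G x) = k • x := hk.symm
  have hl2 : Quotient.out (projQ G y) = l • y := hl.symm
  rw [hk2, hl2, smul_smul, inv_mul_cancel_right, dist_smul] at h1
  exact h1

/-- `π` as a continuous (1-Lipschitz) map. -/
def projCM : C(X, QuotX G X) :=
  ⟨projQ G, (LipschitzWith.of_dist_le_mul (K := 1) fun a b => by
    simpa using projQ_dist_le G a b).continuous⟩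

end Quot

end Paper

namespace Paper

variable {X : Type*} [MetricSpace X]

/-- The space of local geodesic lines of a (pseudo)metric space `Y`, as a subset of the space
of continuous maps `ℝ → Y` (with the topology of uniform convergence on compact sets). -/
def LocGeodSet (Y : Type*) [PseudoMetricSpace Y] : Set C(ℝ, Y) :=
  {γ | ∀ t : ℝ, ∃ ε > 0, ∀ s ∈ Set.Icc (t - ε) (t + ε), ∀ u ∈ Set.Icc (t - ε) (t + ε),
    dist (γ s) (γ u) = |s - u|}

/-- The set of (parametrized) `σ`-geodesic lines of `X`. -/
def SigmaGeodLines (σ : X → X → ℝ → X) : Set C(ℝ, X) := {γ | IsSigmaGeodLine σ ⇑γ}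

section Proj

variable (G : Type*) [Group G] [MulAction G X] [IsIsometricSMul G X]

/-- Post-composition with the projection `π : X → Γ\X`. -/
def projComp (γ : C(ℝ, X)) : C(ℝ, QuotX G X) := (projCM G).comp γ

/-- The space `Loc-Geod_σ(Γ\X)`: the image of the `σ`-geodesic lines of `X` under `Π`. -/
def LocGeodQuotSet (σ : X → X → ℝ → X) : Set C(ℝ, QuotX G X) :=
  projComp G '' SigmaGeodLines σ

end Proj

/-- Translation of `ℝ` by `c`, as a continuous map. -/
def trCM (c : ℝ) : C(ℝ, ℝ) := ⟨fun t => t + c, continuous_add_right c⟩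

/-- The reparametrization flow `Φ_c γ = γ(· + c)`. -/
def shiftCM {Y : Type*} [TopologicalSpace Y] (c : ℝ) (γ : C(ℝ, Y)) : C(ℝ, Y) := γ.comp (trCM c)

lemma shift_sigma {σ : X → X → ℝ → X} (c : ℝ) {γ : ℝ → X} (h : IsSigmaGeodLine σ γ) :
    IsSigmaGeodLine σ fun t => γ (t + c) := by
  constructor
  · exact h.isom.comp (Isometry.of_dist_eq fun a b => dist_add_right a b c)
  · intro s t hst l hl
    have h2 := h.seg (s + c) (t + c) (by linarith) l hl
    calc σ (γ (s + c)) (γ (t + c)) l = γ (s + c + l * (t + c - (s + c))) := h2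
    _ = γ (s + l * (t - s) + c) := by ring_nf

section Flow

variable (G : Type*) [Group G] [MulAction G X] [IsIsometricSMul G X]

lemma shift_mem {σ : X → X → ℝ → X} (c : ℝ) {γ : C(ℝ, QuotX G X)}
    (h : γ ∈ LocGeodQuotSet G σ) : shiftCM c γ ∈ LocGeodQuotSet G σ := by
  obtain ⟨γ', hγ', rfl⟩ := h
  exact ⟨shiftCM c γ', shift_sigma c hγ', ContinuousMap.ext fun t => rfl⟩

/-- The time-one map `Φ₁` of the reparametrization flow on `Loc-Geod_σ(Γ\X)`. -/
def flowOne (σ : X → X → ℝ → X) : ↥(LocGeodQuotSet G σ) → ↥(LocGeodQuotSet G σ) :=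
  fun γ => ⟨shiftCM 1 γ.1, shift_mem G 1 γ.2⟩

end Flow

/-- The class `F` of admissible weight functions. -/
structure AdmissibleF (f : ℝ → ℝ) : Prop where
  cont : Continuous f
  pos : ∀ s, 0 < f s
  symm : ∀ s : ℝ, f (-s) = f s
  integrable : MeasureTheory.Integrable f
  mass : ∫ s, f s = 1
  momentIntegrable : MeasureTheory.Integrable fun s : ℝ => 2 * |s| * f s

/-- The constant `C(f) = ∫ 2|s| f(s) ds`. -/
def Cf (f : ℝ → ℝ) : ℝ := ∫ s : ℝ, 2 * |s| * f s

/-- The distance `f(γ,γ') = ∫ d(γ(s),γ'(s)) f(s) ds` on spaces of (local) geodesics. -/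
def fDist (f : ℝ → ℝ) {Y : Type*} [PseudoMetricSpace Y] (γ γ' : C(ℝ, Y)) : ℝ :=
  ∫ s : ℝ, dist (γ s) (γ' s) * f s

section Dynamics

variable {Y : Type*}

/-- The dynamical distance `d^n(y,y') = max_{0 ≤ i ≤ n-1} d(T^i y, T^i y')`. -/
def dynDist (d : Y → Y → ℝ) (T : Y → Y) (n : ℕ) (a b : Y) : ℝ :=
  ⨆ i : Fin n, d (T^[(i : ℕ)] a) (T^[(i : ℕ)] b)

/-- The dynamical ball `B_{d^n}(a,r)`. -/
def dynBall (d : Y → Y → ℝ) (T : Y → Y) (n : ℕ) (a : Y) (r : ℝ) : Set Y :=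
  {b | dynDist d T n a b < r}

/-- The covering number of `K` at scale `r` with respect to a distance function `d`. -/
def covNum (d : Y → Y → ℝ) (K : Set Y) (r : ℝ) : ℕ :=
  sInf {m : ℕ | ∃ c : Fin m → Y, K ⊆ ⋃ i, {b | d (c i) b < r}}

/-- The Bowen entropy of `K` w.r.t. `d`: `lim_{r→0} limsup_n (1/n) log Cov_{d^n}(K,r)`. -/
def covEntropy (d : Y → Y → ℝ) (T : Y → Y) (K : Set Y) : EReal :=
  ⨆ r : {r : ℝ // 0 < r},
    limsup (fun n : ℕ => ((Real.log (covNum (dynDist d T n) K r.1) / n : ℝ) : EReal)) atTop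

/-- The entropy of (the join of the first `n` iterates of) a finite measurable partition. -/
def partitionEnt [MeasurableSpace Y] (μ : Measure Y) (T : Y → Y) {k : ℕ}
    (P : Fin k → Set Y) (n : ℕ) : ℝ :=
  ∑ a : Fin n → Fin k, Real.negMulLog (μ (⋂ i : Fin n, T^[(i : ℕ)] ⁻¹' P (a i))).toReal

/-- The Kolmogorov–Sinai entropy of `μ`. -/
def ksEntropy [MeasurableSpace Y] (μ : Measure Y) (T : Y → Y) : EReal :=
  ⨆ (k : ℕ) (P : Fin k → Set Y)
    (_ : (∀ i, MeasurableSet (P i)) ∧ Pairwise (Function.onFun Disjoint P) ∧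
      ⋃ i, P i = Set.univ),
    ((liminf (fun n : ℕ => partitionEnt μ T P n / n) atTop : ℝ) : EReal)

/-- `d` is the distance of a metric inducing the topology of `Y`. -/
def InducesTopology [ts : TopologicalSpace Y] (d : Y → Y → ℝ) : Prop :=
  ∃ m : MetricSpace Y, m.toPseudoMetricSpace.toUniformSpace.toTopologicalSpace = ts ∧
    ∀ a b : Y, @dist Y m.toPseudoMetricSpace.toDist a b = d a b

/-- `d` is the distance of a complete metric inducing the topology of `Y`. -/
def InducesTopologyComplete [ts : TopologicalSpace Y] (d : Y → Y → ℝ) : Prop :=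
  ∃ m : MetricSpace Y, m.toPseudoMetricSpace.toUniformSpace.toTopologicalSpace = ts ∧
    (∀ a b : Y, @dist Y m.toPseudoMetricSpace.toDist a b = d a b) ∧
    @CompleteSpace Y m.toPseudoMetricSpace.toUniformSpace

/-- The upper local entropy of `μ` with respect to the distance `d`. -/
def upperLocalEnt [MeasurableSpace Y] (μ : Measure Y) (T : Y → Y) (d : Y → Y → ℝ) : EReal :=
  essSup (fun y : Y =>
    ⨆ r : {r : ℝ // 0 < r},
      limsup (fun n : ℕ =>
        ((-Real.log (μ (dynBall d T n y r.1)).toReal / n : ℝ) : EReal)) atTop) μ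

/-- The lower local entropy of `μ` with respect to the distance `d`. -/
def lowerLocalEnt [MeasurableSpace Y] (μ : Measure Y) (T : Y → Y) (d : Y → Y → ℝ) : EReal :=
  essInf (fun y : Y =>
    ⨆ r : {r : ℝ // 0 < r},
      liminf (fun n : ℕ =>
        ((-Real.log (μ (dynBall d T n y r.1)).toReal / n : ℝ) : EReal)) atTop) μ

/-- The ergodic invariant probability measures of `(Y,T)`. -/
def ErgProb [MeasurableSpace Y] (T : Y → Y) :=
  {μ : Measure Y // IsProbabilityMeasure μ ∧ Ergodic T μ}

/-- The topological entropy, defined as the supremum of the Kolmogorov–Sinai entropies of the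
ergodic invariant probability measures. -/
def topEnt [MeasurableSpace Y] (T : Y → Y) : EReal :=
  ⨆ μ : ErgProb T, ksEntropy μ.1 T

/-- The upper local entropy of the system: `sup_μ inf_d` of the upper local entropies. -/
def upperLocalEntSys [TopologicalSpace Y] [MeasurableSpace Y] (T : Y → Y) : EReal :=
  ⨆ μ : ErgProb T, ⨅ d : {d : Y → Y → ℝ // InducesTopologyComplete d},
    upperLocalEnt μ.1 T d.1

/-- The lower local entropy of the system: `sup_μ inf_d` of the lower local entropies. -/
def lowerLocalEntSys [TopologicalSpace Y] [MeasurableSpace Y] (T : Y → Y) : EReal :=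
  ⨆ μ : ErgProb T, ⨅ d : {d : Y → Y → ℝ // InducesTopologyComplete d},
    lowerLocalEnt μ.1 T d.1

/-- The invariant topological entropy: in the Bowen formula the supremum is restricted to the
compact `T`-invariant subsets. -/
def invTopEnt [TopologicalSpace Y] (T : Y → Y) : EReal :=
  ⨅ d : {d : Y → Y → ℝ // InducesTopology d},
    ⨆ K : {K : Set Y // IsCompact K ∧ T '' K = K}, covEntropy d.1 T K.1

end Dynamics

end Paper

namespace Paper

/-- The set `K_τ` of `σ`-local geodesics of `Γ\X` whose image stays in the closed ball of radius
`τ` around `πx`. -/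
def Ktau {X : Type*} [MetricSpace X] (G : Type*) [Group G] [MulAction G X] [IsIsometricSMul G X]
    (σ : X → X → ℝ → X) (x : X) (τ : ℝ) : Set ↥(LocGeodQuotSet G σ) :=
  {γ | ∀ n : ℤ, (γ : C(ℝ, QuotX G X)) (n : ℝ) ∈ Metric.closedBall (projQ G x) τ}

end Paper

/-!
Packing at scale `r₀` passes to every smaller scale `r`: pulling a configuration in
`B̄(z, 3r)` back along the homothety `σ z · (r / r₀)` (whose preimages exist by geodesic
completeness) multiplies distances by at least `r₀ / r`. Radial projection along `σ` then covers
`B̄(z, 3r + kr)` by finitely many balls of radius `3r`, so closed balls are totally bounded and,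
`X` being complete, `X` is proper. By Arzelà–Ascoli the `σ`-geodesic lines with `γ 0 ∈ B̄(x, τ)`
form a compact family. Discreteness makes the quotient distance an attained minimum, so every
element of `K_τ` lifts to such a line, and `K_τ`, being closed, is compact. Conversely the values
at `0` of a compact `Φ₁`-invariant set lie in a ball, and invariance under `Φ₁` and `Φ₁⁻¹` moves
every integer time to time `0`.
-/

lemma isCompact_setOf_coe_mem_of_lipschitzWith {α Y : Type*} [PseudoMetricSpace α]
    [MetricSpace Y] [ProperSpace Y] {P : Set (α → Y)} (hP : IsClosed P) {K : ℝ≥0}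
    (hlip : ∀ f ∈ P, LipschitzWith K f) {a : α} {y : Y} {R : ℝ}
    (hbase : ∀ f ∈ P, f a ∈ closedBall y R) : IsCompact {γ : C(α, Y) | ⇑γ ∈ P} := by
  have himage : ContinuousMap.toFun '' {γ : C(α, Y) | ⇑γ ∈ P} = P := by
    ext f
    exact ⟨by rintro ⟨γ, hγ, rfl⟩; exact hγ, fun hf => ⟨⟨f, (hlip f hf).continuous⟩, hf, rfl⟩⟩
  have hbounded : P ⊆ univ.pi fun t => closedBall y (K * dist t a + R) := fun f hf t _ =>
    calc dist (f t) y ≤ dist (f t) (f a) + dist (f a) y := dist_triangle _ _ _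
      _ ≤ K * dist t a + R := add_le_add ((hlip f hf).dist_le_mul t a) (hbase f hf)
  refine ArzelaAscoli.isCompact_of_equicontinuous _ ?_ ?_
  · rw [himage]
    exact (isCompact_univ_pi fun t => isCompact_closedBall _ _).of_isClosed_subset hP hbounded
  · exact (LipschitzWith.uniformEquicontinuous _ K fun γ => hlip _ γ.2).equicontinuous

namespace Paper

section Packing

variable {X : Type*} [MetricSpace X]

lemma IsPacked.encard_le {P₀ : ℕ} {r : ℝ} (hpack : IsPacked X P₀ r) {z : X} {C : Set X}
    (hC : C ⊆ closedBall z (3 * r)) (hsep : C.Pairwise fun y y' => 2 * r < dist y y') :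
    C.encard ≤ P₀ := by
  by_contra! hlt
  obtain ⟨D, hDC, hD⟩ := Set.exists_subset_encard_eq (Order.add_one_le_of_lt hlt)
  have hDfin : D.Finite := Set.finite_of_encard_eq_coe hD
  have hcard := hpack z hDfin.toFinset (by simpa using hDC.trans hC)
    (by simpa using fun y hy y' hy' => hsep (hDC hy) (hDC hy'))
  rw [hDfin.encard_eq_coe_toFinset_card] at hD
  norm_cast at hD
  omega

lemma IsPacked.exists_finite_cover {P₀ : ℕ} {r : ℝ} (hpack : IsPacked X P₀ r) (hr : 0 ≤ r)
    (z : X) : ∃ N : Set X, N.Finite ∧ closedBall z (3 * r) ⊆ ⋃ c ∈ N, closedBall c (2 * r) := by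
  set ε : ℝ≥0 := ⟨2 * r, by positivity⟩
  have hsep : ∀ {C : Set X}, IsSeparated ε C → C.Pairwise fun y y' => 2 * r < dist y y' :=
    fun hC y hy y' hy' hne => by
      have : (ε : ℝ≥0∞) < edist y y' := hC hy hy' hne
      rw [edist_dist, ← ENNReal.ofReal_coe_nnreal] at this
      exact (ENNReal.ofReal_lt_ofReal_iff_of_nonneg ε.2).1 this
  have hpackNum : packingNumber ε (closedBall z (3 * r)) ≠ ⊤ :=
    ne_top_of_le_ne_top (ENat.natCast_ne_top P₀) <| iSup₂_le fun C hC => iSup_le fun hCsep =>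
      hpack.encard_le hC (hsep hCsep)
  refine ⟨maximalSeparatedSet ε (closedBall z (3 * r)), ?_, ?_⟩
  · rw [← Set.encard_ne_top_iff, encard_maximalSeparatedSet hpackNum]
    exact hpackNum
  · exact (isCover_maximalSeparatedSet hpackNum).subset_iUnion_closedBall

end Packing

section Bicombing

variable {X : Type*} [MetricSpace X] {σ : X → X → ℝ → X}

lemma IsGCB.dist_left (h : IsGCB σ) (x y : X) {l : ℝ} (hl : l ∈ Icc (0:ℝ) 1) :
    dist x (σ x y l) = l * dist x y := by
  have := h.propor x y 0 (left_mem_Icc.2 zero_le_one) l hl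
  rwa [h.source, zero_sub, abs_neg, abs_of_nonneg hl.1] at this

lemma IsGCB.dist_right (h : IsGCB σ) (x y : X) {l : ℝ} (hl : l ∈ Icc (0:ℝ) 1) :
    dist (σ x y l) y = (1 - l) * dist x y := by
  have := h.propor x y l hl 1 (right_mem_Icc.2 zero_le_one)
  rwa [h.target, abs_sub_comm, abs_of_nonneg (sub_nonneg.2 hl.2)] at this

lemma IsGCB.dist_apply_le (h : IsGCB σ) (x y x' y' : X) {l : ℝ} (hl : l ∈ Icc (0:ℝ) 1) :
    dist (σ x y l) (σ x' y' l) ≤ (1 - l) * dist x x' + l * dist y y' := by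
  have := (h.convex x y x' y').2 (left_mem_Icc.2 zero_le_one) (right_mem_Icc.2 zero_le_one)
    (sub_nonneg.2 hl.2) hl.1 (sub_add_cancel 1 l)
  simpa only [smul_eq_mul, mul_zero, mul_one, zero_add, h.source, h.target] using this

lemma IsGCB.continuous_uncurry (h : IsGCB σ) {l : ℝ} (hl : l ∈ Icc (0:ℝ) 1) :
    Continuous fun p : X × X => σ p.1 p.2 l := by
  refine (LipschitzWith.of_dist_le_mul (K := 1) fun p q => ?_).continuous
  rw [NNReal.coe_one, one_mul, Prod.dist_eq]
  calc dist (σ p.1 p.2 l) (σ q.1 q.2 l) ≤ (1 - l) * dist p.1 q.1 + l * dist p.2 q.2 :=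
        h.dist_apply_le _ _ _ _ hl
    _ ≤ (1 - l) * max (dist p.1 q.1) (dist p.2 q.2) + l * max (dist p.1 q.1) (dist p.2 q.2) := by
        gcongr
        exacts [sub_nonneg.2 hl.2, le_max_left _ _, hl.1, le_max_right _ _]
    _ = max (dist p.1 q.1) (dist p.2 q.2) := by ring

lemma IsGCB.exists_extension (h : IsGCB σ) (z y : X) {μ : ℝ} (hμ : μ ∈ Ioc (0:ℝ) 1) :
    ∃ w : X, dist z w = dist z y / μ ∧ σ z w μ = y := by
  obtain ⟨γ, hγ, a, b, -, hlen, hpar⟩ := h.geodComplete z y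
  have hγa : γ a = z := by simpa [h.source] using hpar 0 (left_mem_Icc.2 zero_le_one)
  have hγb : γ b = y := by simpa [h.target] using hpar 1 (right_mem_Icc.2 zero_le_one)
  rw [← hlen]
  have hL : 0 ≤ (b - a) / μ := by rw [hlen]; exact div_nonneg dist_nonneg hμ.1.le
  refine ⟨γ (a + (b - a) / μ), ?_, ?_⟩
  · rw [← hγa, hγ.isom.dist_eq, Real.dist_eq, sub_add_cancel_left, abs_neg, abs_of_nonneg hL]
  · have := hγ.seg a (a + (b - a) / μ) (by linarith) μ (Ioc_subset_Icc_self hμ)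
    rwa [hγa, add_sub_cancel_left, mul_div_cancel₀ _ hμ.1.ne', add_sub_cancel, hγb] at this

lemma IsGCB.isPacked_of_le (h : IsGCB σ) {P₀ : ℕ} {r₀ r : ℝ} (hpack : IsPacked X P₀ r₀)
    (hr : 0 < r) (hrr : r ≤ r₀) : IsPacked X P₀ r := by
  classical
  intro z s hs hsep
  have hr₀ : 0 < r₀ := hr.trans_le hrr
  have hμ : r / r₀ ∈ Ioc (0:ℝ) 1 := ⟨div_pos hr hr₀, (div_le_one hr₀).2 hrr⟩
  choose w hw_dist hw_apply using fun y => h.exists_extension z y hμ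
  have hinj : Set.InjOn w s := fun y₁ _ y₂ _ he => by rw [← hw_apply y₁, ← hw_apply y₂, he]
  rw [← Finset.card_image_of_injOn hinj]
  refine hpack z _ ?_ ?_
  · simp only [Finset.coe_image, Set.image_subset_iff]
    intro y hy
    calc dist (w y) z = dist z y / (r / r₀) := by rw [dist_comm, hw_dist]
      _ ≤ 3 * r / (r / r₀) := by gcongr; exact mem_closedBall'.1 (hs hy)
      _ = 3 * r₀ := by field_simp
  · simp only [Finset.mem_image]
    rintro _ ⟨y₁, hy₁, rfl⟩ _ ⟨y₂, hy₂, rfl⟩ hne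
    have hcontr := h.dist_apply_le z (w y₁) z (w y₂) (Ioc_subset_Icc_self hμ)
    rw [hw_apply, hw_apply, dist_self, mul_zero, zero_add] at hcontr
    refine lt_of_mul_lt_mul_left ?_ hμ.1.le
    calc r / r₀ * (2 * r₀) = 2 * r := by field_simp
      _ < dist y₁ y₂ := hsep y₁ hy₁ y₂ hy₂ (ne_of_apply_ne w hne)
      _ ≤ r / r₀ * dist (w y₁) (w y₂) := hcontr

lemma IsGCB.exists_dist_le_of_dist_le_add (h : IsGCB σ) (z y : X) {R r : ℝ} (hR : 0 ≤ R)
    (hr : 0 ≤ r) (hy : dist z y ≤ R + r) : ∃ p, dist z p ≤ R ∧ dist p y ≤ r := by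
  rcases le_or_gt (dist z y) R with hle | hlt
  · exact ⟨y, hle, by rwa [dist_self]⟩
  have hd : 0 < dist z y := hR.trans_lt hlt
  have hl : R / dist z y ∈ Icc (0:ℝ) 1 := ⟨div_nonneg hR hd.le, (div_le_one hd).2 hlt.le⟩
  refine ⟨σ z y (R / dist z y), ?_, ?_⟩
  · rw [h.dist_left z y hl, div_mul_cancel₀ _ hd.ne']
  · rw [h.dist_right z y hl, sub_mul, div_mul_cancel₀ _ hd.ne']
    linarith

end Bicombing

section Proper

variable {X : Type*} [MetricSpace X] {σ : X → X → ℝ → X}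

lemma IsGCB.exists_finite_cover_closedBall (h : IsGCB σ) {P₀ : ℕ} {r : ℝ}
    (hpack : IsPacked X P₀ r) (hr : 0 ≤ r) (z : X) (k : ℕ) :
    ∃ N : Set X, N.Finite ∧ closedBall z (3 * r + k * r) ⊆ ⋃ c ∈ N, closedBall c (3 * r) := by
  induction k with
  | zero => exact ⟨{z}, finite_singleton z, by simp⟩
  | succ k ih =>
    obtain ⟨N, hN, hcover⟩ := ih
    choose M hM hMcover using hpack.exists_finite_cover hr
    refine ⟨⋃ c ∈ N, M c, hN.biUnion fun c _ => hM c, fun y hy => ?_⟩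
    rw [mem_closedBall, dist_comm, Nat.cast_succ, add_one_mul, ← add_assoc] at hy
    obtain ⟨p, hzp, hpy⟩ := h.exists_dist_le_of_dist_le_add z y (by positivity) hr hy
    obtain ⟨c, hc, hpc⟩ := mem_iUnion₂.1 (hcover (mem_closedBall_comm.1 hzp))
    obtain ⟨c', hc', hpc'⟩ := mem_iUnion₂.1 (hMcover c hpc)
    refine mem_biUnion (mem_biUnion hc hc') (mem_closedBall.2 ?_)
    calc dist y c' ≤ dist y p + dist p c' := dist_triangle _ _ _
      _ ≤ r + 2 * r := add_le_add (by rwa [dist_comm]) (mem_closedBall.1 hpc')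
      _ = 3 * r := by ring

lemma IsGCB.properSpace [CompleteSpace X] (h : IsGCB σ) {P₀ : ℕ} {r₀ : ℝ}
    (hpack : IsPacked X P₀ r₀) (hr₀ : 0 < r₀) : ProperSpace X := by
  refine ⟨fun z R => TotallyBounded.isCompact_of_isClosed ?_ isClosed_closedBall⟩
  refine Metric.totallyBounded_iff.2 fun ε hε => ?_
  set r := min (ε / 4) r₀
  have hr : 0 < r := lt_min (by positivity) hr₀
  obtain ⟨N, hN, hcover⟩ := h.exists_finite_cover_closedBall
    (h.isPacked_of_le hpack hr (min_le_right _ _)) hr.le z ⌈R / r⌉₊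
  have hR : R ≤ 3 * r + ⌈R / r⌉₊ * r := by
    have := (div_le_iff₀ hr).1 (Nat.le_ceil (R / r))
    linarith
  refine ⟨N, hN, (closedBall_subset_closedBall hR).trans (hcover.trans ?_)⟩
  refine iUnion₂_mono fun c _ => closedBall_subset_ball ?_
  linarith [min_le_left (ε / 4) r₀]

end Proper

section Quotient

variable {X : Type*} [MetricSpace X] {G : Type*} [Group G] [MulAction G X]

lemma projQ_smul (g : G) (z : X) : projQ G (g • z) = projQ G z :=
  Quotient.sound (MulAction.mem_orbit_iff.2 ⟨g, rfl⟩)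

lemma exists_smul_eq_out_projQ (z : X) : ∃ k : G, k • z = (projQ G z).out :=
  MulAction.mem_orbit_iff.1 (Quotient.mk_out (s := MulAction.orbitRel G X) z)

variable [IsIsometricSMul G X]

lemma dist_projQ (z w : X) : dist (projQ G z) (projQ G w) = ⨅ g : G, dist z (g • w) := by
  obtain ⟨k, hk⟩ := exists_smul_eq_out_projQ (G := G) z
  obtain ⟨l, hl⟩ := exists_smul_eq_out_projQ (G := G) w
  change ⨅ g : G, dist (projQ G z).out (g • (projQ G w).out) = _
  have hdist : ∀ g : G, dist (k • z) (g • l • w) = dist z ((k⁻¹ * (g * l)) • w) := fun g => by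
    rw [← dist_smul k⁻¹, inv_smul_smul, smul_smul, smul_smul, mul_assoc]
  simp only [← hk, ← hl, hdist]
  exact ((Equiv.mulRight l).trans (Equiv.mulLeft k⁻¹)).iInf_comp (g := fun g => dist z (g • w))

lemma exists_dist_smul_eq_dist_projQ (hdisc : DiscreteAction G X) (z w : X) :
    ∃ g : G, dist z (g • w) = dist (projQ G z) (projQ G w) := by
  rw [dist_projQ]
  set q := ⨅ g : G, dist z (g • w)
  have hbdd : BddBelow (range fun g : G => dist z (g • w)) :=
    ⟨0, by rintro _ ⟨g, rfl⟩; exact dist_nonneg⟩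
  set S := {g : G | dist z (g • w) ≤ q + 1}
  have hS : S.Finite := (hdisc z (q + 1 + dist w z)).subset fun g (hg : g ∈ S) =>
    calc dist z (g • z) ≤ dist z (g • w) + dist (g • w) (g • z) := dist_triangle _ _ _
      _ = dist z (g • w) + dist w z := by rw [dist_smul]
      _ ≤ q + 1 + dist w z := by linarith [show dist z (g • w) ≤ q + 1 from hg]
  obtain ⟨g₀, hg₀⟩ := exists_lt_of_ciInf_lt (lt_add_one q)
  obtain ⟨g₁, -, hg₁⟩ := S.exists_min_image (fun g => dist z (g • w)) hS ⟨g₀, hg₀.le⟩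
  refine ⟨g₁, le_antisymm (le_ciInf fun g => ?_) (ciInf_le hbdd g₁)⟩
  by_cases hg : g ∈ S
  · exact hg₁ g hg
  · exact (hg₁ g₀ hg₀.le).trans (hg₀.trans (not_le.1 hg)).le

end Quotient

section GeodesicLines

variable {X : Type*} [MetricSpace X] {σ : X → X → ℝ → X}

lemma IsGCB.isClosed_setOf_isSigmaGeodLine (h : IsGCB σ) :
    IsClosed {f : ℝ → X | IsSigmaGeodLine σ f} := by
  have hdef : {f : ℝ → X | IsSigmaGeodLine σ f} = {f | ∀ s t, edist (f s) (f t) = edist s t} ∩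
      {f | ∀ s t, s ≤ t → ∀ l ∈ Icc (0:ℝ) 1, σ (f s) (f t) l = f (s + l * (t - s))} := by
    ext f
    exact ⟨fun hf => ⟨hf.isom, hf.seg⟩, fun hf => ⟨hf.1, hf.2⟩⟩
  rw [hdef]
  simp only [ofPred_forall]
  refine .inter (isClosed_iInter fun s => isClosed_iInter fun t => isClosed_eq ?_ continuous_const)
    (isClosed_iInter fun s => isClosed_iInter fun t => isClosed_iInter fun _ =>
      isClosed_iInter fun l => isClosed_iInter fun hl => isClosed_eq ?_ (continuous_apply _))
  · exact (continuous_apply s).edist (continuous_apply t)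
  · exact (h.continuous_uncurry hl).comp (f := fun f : ℝ → X => (f s, f t)) (by fun_prop)

lemma IsSigmaGeodLine.smul {G : Type*} [Group G] [MulAction G X] [IsIsometricSMul G X]
    (hequiv : SigmaEquivariant G σ) (g : G) {γ : ℝ → X} (h : IsSigmaGeodLine σ γ) :
    IsSigmaGeodLine σ fun t => g • γ t where
  isom := (isometry_smul X g).comp h.isom
  seg s t hst l hl := by rw [← hequiv g (γ s) (γ t) l hl, h.seg s t hst l hl]

lemma IsGCB.isCompact_sigmaGeodLines_apply_zero_mem [ProperSpace X] (h : IsGCB σ) (x : X)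
    (τ : ℝ) : IsCompact {γ ∈ SigmaGeodLines σ | γ 0 ∈ closedBall x τ} :=
  isCompact_setOf_coe_mem_of_lipschitzWith
    (P := {f | IsSigmaGeodLine σ f} ∩ (fun f => f 0) ⁻¹' closedBall x τ)
    (h.isClosed_setOf_isSigmaGeodLine.inter (isClosed_closedBall.preimage (continuous_apply 0)))
    (fun _ hf => hf.1.isom.lipschitz) fun _ hf => hf.2

end GeodesicLines

section LocalGeodesics

variable {X : Type*} [MetricSpace X] {σ : X → X → ℝ → X}
  {G : Type*} [Group G] [MulAction G X] [IsIsometricSMul G X]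

lemma mem_projComp_image_of_apply_zero_mem (hdisc : DiscreteAction G X)
    (hequiv : SigmaEquivariant G σ) {φ : C(ℝ, QuotX G X)} (hφ : φ ∈ LocGeodQuotSet G σ)
    {x : X} {τ : ℝ} (hφ0 : φ 0 ∈ closedBall (projQ G x) τ) :
    φ ∈ projComp G '' {γ ∈ SigmaGeodLines σ | γ 0 ∈ closedBall x τ} := by
  obtain ⟨γ, hγ, rfl⟩ := hφ
  obtain ⟨g, hg⟩ := exists_dist_smul_eq_dist_projQ hdisc x (γ 0)
  refine ⟨⟨fun t => g • γ t, by fun_prop⟩, ⟨hγ.smul hequiv g, ?_⟩, ?_⟩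
  · change dist (g • γ 0) x ≤ τ
    rw [dist_comm, hg, dist_comm]
    exact hφ0
  · ext t
    exact projQ_smul g (γ t)

lemma isCompact_Ktau [ProperSpace X] (hGCB : IsGCB σ) (hdisc : DiscreteAction G X)
    (hequiv : SigmaEquivariant G σ) (x : X) (τ : ℝ) : IsCompact (Ktau G σ x τ) := by
  set L := projComp G '' {γ ∈ SigmaGeodLines σ | γ 0 ∈ closedBall x τ}
  have hLsub : L ⊆ LocGeodQuotSet G σ := image_mono (sep_subset _ _)
  have hL : IsCompact (Subtype.val ⁻¹' L : Set (LocGeodQuotSet G σ)) := by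
    rw [Subtype.isCompact_iff, Subtype.image_preimage_coe, inter_eq_right.2 hLsub]
    exact (hGCB.isCompact_sigmaGeodLines_apply_zero_mem x τ).image
      (ContinuousMap.continuous_postcomp _)
  have hclosed : IsClosed (Ktau G σ x τ) := by
    simp only [Ktau, ofPred_forall]
    exact isClosed_iInter fun n => isClosed_closedBall.preimage
      ((continuous_eval_const (n : ℝ)).comp continuous_subtype_val)
  refine hL.of_isClosed_subset hclosed fun φ hφ => ?_
  exact mem_projComp_image_of_apply_zero_mem hdisc hequiv φ.2 (by exact_mod_cast hφ 0)

lemma flowOne_iterate_apply (γ : LocGeodQuotSet G σ) (m : ℕ) (t : ℝ) :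
    ((flowOne G σ)^[m] γ).1 t = γ.1 (t + m) := by
  induction m generalizing γ with
  | zero => simp
  | succ m ih =>
    rw [Function.iterate_succ_apply, ih, Nat.cast_succ, ← add_assoc]
    rfl

lemma flowOne_surjective : Function.Surjective (flowOne G σ) := fun φ =>
  ⟨⟨shiftCM (-1) φ.1, shift_mem G (-1) φ.2⟩, Subtype.ext <| ContinuousMap.ext fun t =>
    congrArg φ.1 (add_neg_cancel_right t 1)⟩

lemma flowOne_mem_Ktau_iff {x : X} {τ : ℝ} {γ : LocGeodQuotSet G σ} :
    flowOne G σ γ ∈ Ktau G σ x τ ↔ γ ∈ Ktau G σ x τ := by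
  have happly : ∀ n : ℤ, (flowOne G σ γ).1 n = γ.1 ↑(n + 1) := fun n => by
    push_cast
    rfl
  refine ⟨fun h n => ?_, fun h n => happly n ▸ h (n + 1)⟩
  have := h (n - 1)
  rwa [happly, sub_add_cancel] at this

lemma image_flowOne_Ktau (x : X) (τ : ℝ) : flowOne G σ '' Ktau G σ x τ = Ktau G σ x τ := by
  have hpre : flowOne G σ ⁻¹' Ktau G σ x τ = Ktau G σ x τ := ext fun _ => flowOne_mem_Ktau_iff
  nth_rw 1 [← hpre]
  exact image_preimage_eq _ flowOne_surjective

end LocalGeodesics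

section InvariantSets

variable {X : Type*} [MetricSpace X] {σ : X → X → ℝ → X}
  {G : Type*} [Group G] [MulAction G X] [IsIsometricSMul G X]

lemma exists_apply_zero_eq_apply_intCast {K : Set (LocGeodQuotSet G σ)}
    (hinv : flowOne G σ '' K = K) {φ : LocGeodQuotSet G σ} (hφ : φ ∈ K) (n : ℤ) :
    ∃ ψ ∈ K, ψ.1 0 = φ.1 n := by
  obtain ⟨m, rfl | rfl⟩ := Int.eq_nat_or_neg n
  · refine ⟨(flowOne G σ)^[m] φ, (mapsTo_iff_image_subset.2 hinv.le).iterate m hφ, ?_⟩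
    rw [flowOne_iterate_apply, zero_add, Int.cast_natCast]
  · obtain ⟨ψ, hψ, rfl⟩ := (show SurjOn (flowOne G σ) K K from hinv.ge).iterate m hφ
    refine ⟨ψ, hψ, ?_⟩
    rw [flowOne_iterate_apply, Int.cast_neg, Int.cast_natCast, neg_add_cancel]

lemma exists_subset_Ktau (x : X) {K : Set (LocGeodQuotSet G σ)} (hK : IsCompact K)
    (hinv : flowOne G σ '' K = K) : ∃ τ : ℝ, 0 ≤ τ ∧ K ⊆ Ktau G σ x τ := by
  obtain ⟨τ, hτ, hball⟩ := (hK.image ((continuous_eval_const 0).comp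
    continuous_subtype_val)).isBounded.subset_closedBall_lt 0 (projQ G x)
  refine ⟨τ, hτ.le, fun φ hφ n => ?_⟩
  obtain ⟨ψ, hψ, hψφ⟩ := exists_apply_zero_eq_apply_intCast hinv hφ n
  exact hψφ ▸ hball (mem_image_of_mem _ hψ)

end InvariantSets

end Paper

open Paper in
theorem statement_17_general {X : Type*} [MetricSpace X] [CompleteSpace X]
    (σ : X → X → ℝ → X) (hGCB : IsGCB σ)
    (P₀ : ℕ) (r₀ : ℝ) (hr₀ : 0 < r₀) (hpack : IsPacked X P₀ r₀)
    (G : Type*) [Group G] [MulAction G X] [IsIsometricSMul G X]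
    (hdisc : DiscreteAction G X)
    (hequiv : SigmaEquivariant G σ) (x : X) :
    (∀ τ : ℝ, 0 ≤ τ → IsCompact (Ktau G σ x τ) ∧ flowOne G σ '' Ktau G σ x τ = Ktau G σ x τ) ∧
    (∀ K : Set ↥(LocGeodQuotSet G σ), IsCompact K → flowOne G σ '' K = K →
      ∃ τ : ℝ, 0 ≤ τ ∧ K ⊆ Ktau G σ x τ) := by
  have := hGCB.properSpace hpack hr₀
  exact ⟨fun τ _ => ⟨isCompact_Ktau hGCB hdisc hequiv x τ, image_flowOne_Ktau x τ⟩,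
    fun _ hK hinv => exists_subset_Ktau x hK hinv⟩

open Paper in
/-- Let `(X,σ)` be a `δ`-hyperbolic GCB-space which is `P₀`-packed at scale
`r₀`, `Γ = G` a group of `σ`-isometries acting discretely and freely, and `x ∈ X`. Then `K_τ` is
a compact `Φ₁`-invariant subset of `Loc-Geod_σ(Γ\X)` for every `τ ≥ 0`, and every compact
`Φ₁`-invariant subset is contained in some `K_τ`. -/
theorem statement_17 {X : Type*} [MetricSpace X] [CompleteSpace X]
    (σ : X → X → ℝ → X) (hGCB : IsGCB σ)
    (δ : ℝ) (hδ : 0 ≤ δ) (hhyp : IsHyperbolic X δ)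
    (P₀ : ℕ) (r₀ : ℝ) (hr₀ : 0 < r₀) (hpack : IsPacked X P₀ r₀)
    (G : Type*) [Group G] [MulAction G X] [IsIsometricSMul G X]
    (hdisc : DiscreteAction G X) (hfree : FreeAction G X)
    (hequiv : SigmaEquivariant G σ) (x : X) :
    (∀ τ : ℝ, 0 ≤ τ → IsCompact (Ktau G σ x τ) ∧ flowOne G σ '' Ktau G σ x τ = Ktau G σ x τ) ∧
    (∀ K : Set ↥(LocGeodQuotSet G σ), IsCompact K → flowOne G σ '' K = K →
      ∃ τ : ℝ, 0 ≤ τ ∧ K ⊆ Ktau G σ x τ) :=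
  statement_17_general σ hGCB P₀ r₀ hr₀ hpack G hdisc hequiv x
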